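/- Let λ be infinite and κ = (2^λ)⁺. Given an equivalence relation assignment X ↦ e_X on subsets X of κ of size ≤ λ such that each e_X has at most 2^λ classes, there is a club of ordinals ρ < κ with the property: for every X ⊆ ρ with |X| ≤ λ and every β with ρ < β < κ, there exists γ with ρ < γ < ρ⁺ (the next point of the club) such that β e_X γ. -/

import Mathlib

/-!
The sequence is built by transfinite recursion, taking suprema at limits. At a successor step
from `ρ < κ` there are at most `(|ρ| + ℵ₀)^λ < κ` sets `X ⊆ ρ` with `|X| ≤ λ`, and each `e_X` has
fewer than `κ` classes; choosing one representative above `ρ` of every class that meets `(ρ, κ)`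
yields fewer than `κ` ordinals below `κ`, which are bounded below `κ` since `κ` is regular.
-/

open Cardinal Order Set

universe u

theorem Cardinal.IsRegular.sSup_lt_ord {κ : Cardinal.{u}} (hκ : κ.IsRegular)
    {s : Set Ordinal.{u}} (hs : #s < Cardinal.lift.{u + 1} κ) (h : ∀ a ∈ s, a < κ.ord) :
    sSup s < κ.ord :=
  Ordinal.sSup_lt_of_lt_cof (by rwa [← Ordinal.lift_cof, hκ.cof_ord]) h

theorem Cardinal.IsRegular.exists_lt_ord_forall_lt {κ : Cardinal.{u}} (hκ : κ.IsRegular)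
    {s : Set Ordinal.{u}} (hs : #s < Cardinal.lift.{u + 1} κ) (h : ∀ a ∈ s, a < κ.ord) :
    ∃ δ < κ.ord, ∀ a ∈ s, a < δ :=
  ⟨succ (sSup s), (isSuccLimit_ord hκ.aleph0_le).succ_lt (hκ.sSup_lt_ord hs h),
    fun _ ha => lt_succ_iff.2 (le_csSup ⟨κ.ord, fun b hb => (h b hb).le⟩ ha)⟩

theorem exists_subset_mk_le_forall_exists_eq {α β : Type u} (f : α → β) (s : Set α) :
    ∃ t ⊆ s, #t ≤ #β ∧ ∀ a ∈ s, ∃ b ∈ t, f b = f a := by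
  obtain ⟨t, hts, hinj, himage⟩ := (surjOn_image f s).exists_subset_injOn_image_eq
  refine ⟨t, hts, ?_, fun a ha => ?_⟩
  · rw [← mk_image_eq_of_injOn f t hinj]
    exact mk_set_le _
  · exact (himage ▸ mem_image_of_mem f ha : f a ∈ f '' t)

theorem Cardinal.IsRegular.exists_lt_ord_forall_exists_rel {κ : Cardinal.{u}}
    (hκ : κ.IsRegular) {α : Type (u + 1)} {r : α → α → Prop} (hr : Equivalence r)
    (hclasses : #(Quot r) < Cardinal.lift.{u + 1} κ) (v : α → Ordinal.{u}) {s : Set α}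
    (hs : ∀ a ∈ s, v a < κ.ord) :
    ∃ δ < κ.ord, ∀ a ∈ s, ∃ b ∈ s, v b < δ ∧ r a b := by
  obtain ⟨t, hts, ht, hrep⟩ := exists_subset_mk_le_forall_exists_eq (Quot.mk r) s
  obtain ⟨δ, hδ, hvδ⟩ := hκ.exists_lt_ord_forall_lt (s := v '' t)
    (mk_image_le.trans_lt (ht.trans_lt hclasses)) (by rintro _ ⟨b, hb, rfl⟩; exact hs b (hts hb))
  refine ⟨δ, hδ, fun a ha => ?_⟩
  obtain ⟨b, hb, hba⟩ := hrep a ha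
  exact ⟨b, hts hb, hvδ _ (mem_image_of_mem v hb), (hr.quot_mk_eq_iff a b).1 hba.symm⟩

theorem mk_bounded_subsets_Iio_lt {κ l : Cardinal.{u}} (hκ : ℵ₀ < κ)
    (hpow : ∀ μ < κ, μ ^ l < κ) {ρ : Ordinal.{u}} (hρ : ρ < κ.ord) :
    #{X : Set Ordinal.{u} | X ⊆ Iio ρ ∧ #X ≤ Cardinal.lift.{u + 1} l} <
      Cardinal.lift.{u + 1} κ :=
  calc _ ≤ max #(Iio ρ) ℵ₀ ^ Cardinal.lift.{u + 1} l := mk_bounded_subset_le _ _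
    _ = Cardinal.lift.{u + 1} (max ρ.card ℵ₀ ^ l) := by
      simp [mk_Iio_ordinal, lift_power, lift_max]
    _ < Cardinal.lift.{u + 1} κ := lift_lt.2 (hpow _ (max_lt (lt_ord.1 hρ) hκ))

theorem exists_lt_ord_forall_exists_rel_between {κ l : Cardinal.{u}} (hκ : κ.IsRegular)
    (hκ₀ : ℵ₀ < κ) (hpow : ∀ μ < κ, μ ^ l < κ) (e : Set Ordinal → Ordinal → Ordinal → Prop)
    (hEquiv : ∀ X : Set Ordinal, #X ≤ Cardinal.lift.{u + 1} l →
      Equivalence (fun β γ : {β : Ordinal // sSup X < β} => e X β.1 γ.1))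
    (hClasses : ∀ X : Set Ordinal, #X ≤ Cardinal.lift.{u + 1} l →
      #(Quot (fun β γ : {β : Ordinal // sSup X < β} => e X β.1 γ.1)) < Cardinal.lift.{u + 1} κ)
    {ρ : Ordinal.{u}} (hρ : ρ < κ.ord) :
    ∃ ρ', ρ < ρ' ∧ ρ' < κ.ord ∧ ∀ X ⊆ Iio ρ, #X ≤ Cardinal.lift.{u + 1} l →
      ∀ β, ρ < β → β < κ.ord → ∃ γ, ρ < γ ∧ γ < ρ' ∧ e X β γ := by
  let S := {X : Set Ordinal.{u} | X ⊆ Iio ρ ∧ #X ≤ Cardinal.lift.{u + 1} l}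
  have hrep (X : S) := hκ.exists_lt_ord_forall_exists_rel (hEquiv X X.2.2) (hClasses X X.2.2)
    Subtype.val (s := {b | ρ < b.1 ∧ b.1 < κ.ord}) fun _ hb => hb.2
  choose δ hδ hrepδ using hrep
  obtain ⟨δ', hδ', hδδ'⟩ := hκ.exists_lt_ord_forall_lt (s := range δ)
    (mk_range_le.trans_lt (mk_bounded_subsets_Iio_lt hκ₀ hpow hρ))
    (by rintro _ ⟨X, rfl⟩; exact hδ X)
  refine ⟨max δ' (succ ρ), lt_max_of_lt_right (lt_succ ρ),
    max_lt hδ' ((isSuccLimit_ord hκ.aleph0_le).succ_lt hρ), fun X hXρ hXl β hρβ hβκ => ?_⟩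
  have hXβ : sSup X < β := (csSup_le' fun x hx => (hXρ hx).le).trans_lt hρβ
  obtain ⟨γ, ⟨hργ, -⟩, hγδ, hβγ⟩ := hrepδ ⟨X, hXρ, hXl⟩ ⟨β, hXβ⟩ ⟨hρβ, hβκ⟩
  exact ⟨γ, hργ, hγδ.trans ((hδδ' _ ⟨_, rfl⟩).trans_le (le_max_left _ _)), hβγ⟩

noncomputable def continuousIterate (F : Ordinal.{u} → Ordinal.{u}) (η : Ordinal.{u}) :
    Ordinal.{u} :=
  Ordinal.limitRecOn η 0 (fun _ => F) fun η _ ih => ⨆ ζ : Iio η, ih ζ ζ.2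

section continuousIterate

variable (F : Ordinal.{u} → Ordinal.{u})

@[simp]
theorem continuousIterate_zero : continuousIterate F 0 = 0 :=
  Ordinal.limitRecOn_zero ..

@[simp]
theorem continuousIterate_add_one (η : Ordinal.{u}) :
    continuousIterate F (η + 1) = F (continuousIterate F η) :=
  Ordinal.limitRecOn_add_one ..

theorem continuousIterate_of_isSuccLimit {η : Ordinal.{u}} (hη : IsSuccLimit η) :
    continuousIterate F η = sSup (continuousIterate F '' Iio η) := by
  rw [sSup_image', continuousIterate, Ordinal.limitRecOn_limit _ _ _ _ hη]
  rfl

theorem continuousIterate_lt_ord_and_strictMono {κ : Cardinal.{u}} (hκ : κ.IsRegular)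
    (hF : ∀ x < κ.ord, x < F x ∧ F x < κ.ord) (η : Ordinal.{u}) (hη : η < κ.ord) :
    continuousIterate F η < κ.ord ∧ ∀ ζ < η, continuousIterate F ζ < continuousIterate F η := by
  induction η using Ordinal.limitRecOn with
  | zero => exact ⟨by simpa using hκ.ord_pos, fun ζ hζ => (not_lt_bot hζ).elim⟩
  | add_one η ih =>
    obtain ⟨hηκ, hmono⟩ := ih ((lt_add_one η).trans hη)
    obtain ⟨hlt, hFκ⟩ := hF _ hηκ
    refine ⟨by simpa using hFκ, fun ζ hζ => ?_⟩
    rw [continuousIterate_add_one]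
    rcases (Order.lt_add_one_iff.1 hζ).lt_or_eq with hζη | rfl
    · exact (hmono ζ hζη).trans hlt
    · exact hlt
  | limit η hlim ih =>
    have hbound : ∀ a ∈ continuousIterate F '' Iio η, a < κ.ord := by
      rintro _ ⟨ζ, hζ, rfl⟩
      exact (ih ζ hζ (hζ.trans hη)).1
    rw [continuousIterate_of_isSuccLimit F hlim]
    refine ⟨hκ.sSup_lt_ord ?_ hbound, fun ζ hζ => ?_⟩
    · refine mk_image_le.trans_lt ?_
      rw [mk_Iio_ordinal, lift_lt]
      exact lt_ord.1 hη
    · have hζ' : ζ + 1 < η := hlim.add_one_lt hζ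
      exact ((ih _ hζ' (hζ'.trans hη)).2 ζ (lt_add_one ζ)).trans_le
        (le_csSup ⟨κ.ord, fun a ha => (hbound a ha).le⟩ (mem_image_of_mem _ hζ'))

end continuousIterate

theorem exists_continuous_strictMonoOn_of_forall_exists {κ : Cardinal.{u}} (hκ : κ.IsRegular)
    {P : Ordinal.{u} → Ordinal.{u} → Prop} (hP : ∀ x < κ.ord, ∃ y, x < y ∧ y < κ.ord ∧ P x y) :
    ∃ ρ : Ordinal → Ordinal, (∀ η < κ.ord, ρ η < κ.ord) ∧ StrictMonoOn ρ (Iio κ.ord) ∧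
      (∀ η < κ.ord, IsSuccLimit η → ρ η = sSup (ρ '' Iio η)) ∧
      ∀ η < κ.ord, P (ρ η) (ρ (η + 1)) := by
  choose! F hF using hP
  have hρ := continuousIterate_lt_ord_and_strictMono F hκ fun x hx => ⟨(hF x hx).1, (hF x hx).2.1⟩
  refine ⟨continuousIterate F, fun η hη => (hρ η hη).1, fun ζ _ η hη hζη => (hρ η hη).2 ζ hζη,
    fun _ _ hlim => continuousIterate_of_isSuccLimit F hlim, fun η hη => ?_⟩
  rw [continuousIterate_add_one]
  exact (hF _ (hρ η hη).1).2.2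


/-- For κ = (2^λ)⁺ and equivalence relations e_X (X ⊆ κ, |X| ≤ λ) each with at most
2^λ classes, there is a continuous strictly increasing sequence ⟨ρ_η : η < κ⟩ such
that every e_X-class (X ⊆ ρ_η) with a representative above ρ_η has a representative
in the interval (ρ_η, ρ_{η+1}). -/
theorem stmt14 (l : Cardinal.{0}) (hl : Cardinal.aleph0 ≤ l)
    (κ : Cardinal.{0}) (hκ : κ = Order.succ (2 ^ l))
    (e : Set Ordinal → Ordinal → Ordinal → Prop)
    (hEquiv : ∀ X : Set Ordinal, Cardinal.mk X ≤ Cardinal.lift.{1} l →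
      Equivalence (fun β γ : {β : Ordinal // sSup X < β} => e X β.1 γ.1))
    (hClasses : ∀ X : Set Ordinal, Cardinal.mk X ≤ Cardinal.lift.{1} l →
      Cardinal.mk (Quot (fun β γ : {β : Ordinal // sSup X < β} => e X β.1 γ.1)) ≤
        Cardinal.lift.{1} (2 ^ l)) :
    ∃ ρ : Ordinal → Ordinal,
      (∀ η < κ.ord, ρ η < κ.ord) ∧
      StrictMonoOn ρ (Set.Iio κ.ord) ∧
      (∀ η < κ.ord, Order.IsSuccLimit η → ρ η = sSup (ρ '' Set.Iio η)) ∧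
      (∀ η < κ.ord, ∀ X : Set Ordinal, X ⊆ Set.Iio (ρ η) →
        Cardinal.mk X ≤ Cardinal.lift.{1} l →
        ∀ β : Ordinal, ρ η < β → β < κ.ord →
          ∃ γ : Ordinal, ρ η < γ ∧ γ < ρ (η + 1) ∧ e X β γ) := by
  subst hκ
  have h2l : ℵ₀ ≤ (2 : Cardinal) ^ l := hl.trans (cantor l).le
  have hreg := isRegular_succ h2l
  have hpow : ∀ μ < succ ((2 : Cardinal) ^ l), μ ^ l < succ ((2 : Cardinal) ^ l) :=
    fun μ hμ => lt_succ_iff.2 <|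
      calc μ ^ l ≤ ((2 : Cardinal) ^ l) ^ l := power_le_power_right (lt_succ_iff.1 hμ)
        _ = 2 ^ l := by rw [← power_mul, mul_eq_self hl]
  exact exists_continuous_strictMonoOn_of_forall_exists hreg fun ρ hρ =>
    exists_lt_ord_forall_exists_rel_between hreg (h2l.trans_lt (lt_succ _)) hpow e hEquiv
      (fun X hX => (hClasses X hX).trans_lt (lift_lt.2 (lt_succ _))) hρ
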